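/- arXiv:1609.06959 — 5 statements merged into one kernel-verified Lean document; each statement's English description precedes it below -/
import Mathlib

section
/- Let X and Y be real Hilbert spaces, let A : X → X, C : X → Y and K : Y → X be bounded linear operators, let T > 0 and γ₀ > 0. Assume that ‖exp(tA)‖ ≤ 1 for all t ∈ [0,T] and that for every x ∈ X one has ∫₀^T ‖C (exp(tA) x)‖²_Y dt ≥ γ₀² ‖x‖²_X. Then for every x ∈ X, ∫₀^T ‖C (exp(t(A − K∘C)) x)‖²_Y dt ≥ γ² ‖x‖²_X, where γ = γ₀·√2 / (√2 + T·‖C‖·‖K‖). -/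
/-!
With `B = A - K C`, Duhamel's formula gives `e^{tA} x = e^{tB} x + ∫₀ᵗ e^{(t-s)A} K C e^{sB} x ds`,
so contractivity of `e^{tA}` bounds the output `‖C e^{tA} x‖` by
`‖C e^{tB} x‖ + ‖C‖ ‖K‖ ∫₀ᵗ ‖C e^{sB} x‖ ds`. Taking `L²(0, T)` norms (Minkowski, and Cauchy–Schwarz
for `∫₀ᵗ ≤ √t ‖·‖`) shows that the output of `A` is at most `1 + ‖C‖ ‖K‖ T / √2` times that of `B`,
and observability of `(A, C)` bounds the former from below by `γ₀ ‖x‖`.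
-/

open MeasureTheory NormedSpace

section L2Interval

variable {f g : ℝ → ℝ} {a b : ℝ}

theorem sq_intervalIntegral_mul_le (hf : Continuous f) (hg : Continuous g) (hab : a ≤ b) :
    (∫ t in a..b, f t * g t) ^ 2 ≤ (∫ t in a..b, f t ^ 2) * ∫ t in a..b, g t ^ 2 := by
  have hf2 : IntervalIntegrable (fun t => f t ^ 2) volume a b := (hf.pow 2).intervalIntegrable a b
  have hg2 : IntervalIntegrable (fun t => g t ^ 2) volume a b := (hg.pow 2).intervalIntegrable a b
  have hfg : IntervalIntegrable (fun t => f t * g t) volume a b :=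
    (hf.mul hg).intervalIntegrable a b
  -- `c ↦ ∫ (c f - g)²` is a nonnegative quadratic, so its discriminant is nonpositive
  have hquad : ∀ c : ℝ, 0 ≤ (∫ t in a..b, f t ^ 2) * (c * c) +
      (-2 * ∫ t in a..b, f t * g t) * c + ∫ t in a..b, g t ^ 2 := fun c => by
    have hexpand : (fun t => (c * f t - g t) ^ 2) =
        fun t => c ^ 2 * f t ^ 2 - 2 * c * (f t * g t) + g t ^ 2 := by
      ext t; ring
    have hnonneg : 0 ≤ ∫ t in a..b, (c * f t - g t) ^ 2 :=
      intervalIntegral.integral_nonneg hab fun t _ => sq_nonneg _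
    rw [hexpand, intervalIntegral.integral_add ((hf2.const_mul _).sub (hfg.const_mul _)) hg2,
      intervalIntegral.integral_sub (hf2.const_mul _) (hfg.const_mul _),
      intervalIntegral.integral_const_mul, intervalIntegral.integral_const_mul] at hnonneg
    linarith
  have := discrim_le_zero hquad
  rw [discrim] at this
  linarith

theorem sqrt_intervalIntegral_add_sq_le (hf : Continuous f) (hg : Continuous g) (hab : a ≤ b) :
    √(∫ t in a..b, (f t + g t) ^ 2) ≤ √(∫ t in a..b, f t ^ 2) + √(∫ t in a..b, g t ^ 2) := by
  set P := ∫ t in a..b, f t ^ 2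
  set Q := ∫ t in a..b, g t ^ 2
  have hP : 0 ≤ P := intervalIntegral.integral_nonneg hab fun t _ => sq_nonneg _
  have hQ : 0 ≤ Q := intervalIntegral.integral_nonneg hab fun t _ => sq_nonneg _
  have hcs : ∫ t in a..b, f t * g t ≤ √P * √Q := by
    rw [← Real.sqrt_mul hP]
    exact (le_abs_self _).trans (Real.abs_le_sqrt (sq_intervalIntegral_mul_le hf hg hab))
  have hf2 : IntervalIntegrable (fun t => f t ^ 2) volume a b := (hf.pow 2).intervalIntegrable a b
  have hg2 : IntervalIntegrable (fun t => g t ^ 2) volume a b := (hg.pow 2).intervalIntegrable a b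
  have hfg : IntervalIntegrable (fun t => 2 * (f t * g t)) volume a b :=
    ((hf.mul hg).intervalIntegrable a b).const_mul 2
  have hexpand : ∫ t in a..b, (f t + g t) ^ 2 = P + 2 * (∫ t in a..b, f t * g t) + Q := by
    rw [← intervalIntegral.integral_const_mul, ← intervalIntegral.integral_add hf2 hfg,
      ← intervalIntegral.integral_add (hf2.add hfg) hg2]
    congr 1; ext t; ring
  rw [Real.sqrt_le_left (by positivity), hexpand, add_sq, Real.sq_sqrt hP, Real.sq_sqrt hQ]
  linarith

theorem intervalIntegral_le_sqrt_mul_sqrt (hf : Continuous f) (hab : a ≤ b) :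
    ∫ t in a..b, f t ≤ √(b - a) * √(∫ t in a..b, f t ^ 2) := by
  have h := sq_intervalIntegral_mul_le (f := fun _ => 1) continuous_const hf hab
  simp only [one_mul, one_pow, intervalIntegral.integral_const, smul_eq_mul, mul_one] at h
  rw [← Real.sqrt_mul (sub_nonneg.2 hab)]
  exact (le_abs_self _).trans (Real.abs_le_sqrt h)

theorem sqrt_intervalIntegral_mul_sqrt_sq {T : ℝ} (c : ℝ) (hc : 0 ≤ c) (hT : 0 ≤ T) :
    √(∫ t in (0 : ℝ)..T, (c * √t) ^ 2) = c * T / √2 := by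
  have hcongr : Set.EqOn (fun t => (c * √t) ^ 2) (fun t => c ^ 2 * t) (Set.uIcc 0 T) :=
    fun t ht => by
      rw [Set.uIcc_of_le hT] at ht
      simp only [mul_pow, Real.sq_sqrt ht.1]
  rw [intervalIntegral.integral_congr hcongr, intervalIntegral.integral_const_mul, integral_id,
    show c ^ 2 * ((T ^ 2 - 0 ^ 2) / 2) = (c * T) ^ 2 / 2 by ring,
    Real.sqrt_div' _ zero_le_two, Real.sqrt_sq (mul_nonneg hc hT)]

theorem sqrt_intervalIntegral_sq_le_of_le_add_primitive {u v : ℝ → ℝ} {M T : ℝ}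
    (hu : Continuous u) (hv : Continuous v) (hu0 : ∀ t, 0 ≤ u t) (hM : 0 ≤ M) (hT : 0 ≤ T)
    (h : ∀ t ∈ Set.Icc 0 T, u t ≤ v t + M * ∫ s in (0 : ℝ)..t, v s) :
    √(∫ t in (0 : ℝ)..T, u t ^ 2) ≤ (1 + M * T / √2) * √(∫ t in (0 : ℝ)..T, v t ^ 2) := by
  set F := √(∫ t in (0 : ℝ)..T, v t ^ 2)
  -- `∫₀ᵗ v ≤ √t F` by Cauchy–Schwarz; the `L²(0, T)` norm of `√t` is `T / √2`
  have hpt : ∀ t ∈ Set.Icc 0 T, u t ^ 2 ≤ (v t + M * F * √t) ^ 2 := by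
    intro t ht
    have hprim : ∫ s in (0 : ℝ)..t, v s ≤ √t * F :=
      calc ∫ s in (0 : ℝ)..t, v s ≤ √(t - 0) * √(∫ s in (0 : ℝ)..t, v s ^ 2) :=
            intervalIntegral_le_sqrt_mul_sqrt hv ht.1
        _ ≤ √t * F := by
            rw [sub_zero]
            gcongr
            apply Real.sqrt_le_sqrt
            exact intervalIntegral.integral_mono_interval le_rfl ht.1 ht.2
              (Filter.Eventually.of_forall fun s => sq_nonneg _)
              ((hv.pow 2).intervalIntegrable (μ := volume) _ _)
    have hle : u t ≤ v t + M * F * √t :=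
      (h t ht).trans (by linarith [mul_le_mul_of_nonneg_left hprim hM])
    exact pow_le_pow_left₀ (hu0 t) hle 2
  have hw : Continuous fun t => M * F * √t := continuous_const.mul Real.continuous_sqrt
  calc √(∫ t in (0 : ℝ)..T, u t ^ 2) ≤ √(∫ t in (0 : ℝ)..T, (v t + M * F * √t) ^ 2) :=
        Real.sqrt_le_sqrt (intervalIntegral.integral_mono_on hT
          ((hu.pow 2).intervalIntegrable _ _) (((hv.add hw).pow 2).intervalIntegrable _ _) hpt)
    _ ≤ F + √(∫ t in (0 : ℝ)..T, (M * F * √t) ^ 2) := sqrt_intervalIntegral_add_sq_le hv hw hT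
    _ = (1 + M * T / √2) * F := by
        rw [sqrt_intervalIntegral_mul_sqrt_sq _ (by positivity) hT]
        ring

end L2Interval

section Duhamel

variable {𝔸 : Type*} [NormedRing 𝔸] [NormedAlgebra ℝ 𝔸] [CompleteSpace 𝔸]

theorem continuous_exp_smul (A : 𝔸) : Continuous fun s : ℝ => exp (s • A) :=
  continuous_iff_continuousAt.2 fun s => (hasDerivAt_exp_smul_const A s).continuousAt

theorem exp_smul_sub_exp_smul (A B : 𝔸) (t : ℝ) :
    exp (t • A) - exp (t • B) = ∫ s in (0 : ℝ)..t, exp ((t - s) • A) * (A - B) * exp (s • B) := by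
  have hderiv : ∀ s : ℝ, HasDerivAt (fun u : ℝ => exp ((t - u) • A) * exp (u • B))
      (-(exp ((t - s) • A) * (A - B) * exp (s • B))) s := by
    intro s
    convert ((hasDerivAt_exp_smul_const A (t - s)).comp_const_sub t s).fun_mul
      (hasDerivAt_exp_smul_const' B s) using 1
    simp only [mul_sub, sub_mul, neg_mul, mul_assoc]
    abel
  have hcont : Continuous fun s : ℝ => exp ((t - s) • A) * (A - B) * exp (s • B) :=
    (((continuous_exp_smul A).comp (continuous_sub_left t)).mul continuous_const).mul
      (continuous_exp_smul B)
  have := intervalIntegral.integral_eq_sub_of_hasDerivAt (fun s _ => hderiv s)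
    (hcont.neg.intervalIntegrable 0 t)
  simp only [intervalIntegral.integral_neg, sub_self, zero_smul, exp_zero, sub_zero, one_mul,
    mul_one] at this
  rw [← neg_sub, ← this, neg_neg]

end Duhamel

theorem norm_apply_exp_smul_le_of_feedback {X Y : Type*} [NormedAddCommGroup X] [NormedSpace ℝ X]
    [CompleteSpace X] [NormedAddCommGroup Y] [NormedSpace ℝ Y]
    (A : X →L[ℝ] X) (C : X →L[ℝ] Y) (K : Y →L[ℝ] X) (x : X) {t : ℝ} (ht : 0 ≤ t)
    (hcontr : ∀ s ∈ Set.Icc 0 t, ‖exp (s • A)‖ ≤ 1) :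
    ‖C (exp (t • A) x)‖ ≤ ‖C (exp (t • (A - K ∘L C)) x)‖ +
      ‖C‖ * ‖K‖ * ∫ s in (0 : ℝ)..t, ‖C (exp (s • (A - K ∘L C)) x)‖ := by
  set B := A - K ∘L C
  set G : ℝ → X →L[ℝ] X := fun s => exp ((t - s) • A) * (K ∘L C) * exp (s • B)
  have hG : Continuous G :=
    (((continuous_exp_smul A).comp (continuous_sub_left t)).mul continuous_const).mul
      (continuous_exp_smul B)
  have hduhamel : exp (t • A) x = exp (t • B) x + ∫ s in (0 : ℝ)..t, G s x := by
    have h : (exp (t • A) - exp (t • B)) x = (∫ s in (0 : ℝ)..t, G s) x := by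
      rw [exp_smul_sub_exp_smul A B t, sub_sub_cancel]
    rw [ContinuousLinearMap.intervalIntegral_apply (hG.intervalIntegrable 0 t)] at h
    exact eq_add_of_sub_eq' h
  have hGx : ∀ s ∈ Set.Icc 0 t, ‖G s x‖ ≤ ‖K‖ * ‖C (exp (s • B) x)‖ := fun s hs =>
    calc ‖exp ((t - s) • A) (K (C (exp (s • B) x)))‖
        ≤ ‖exp ((t - s) • A)‖ * ‖K (C (exp (s • B) x))‖ := ContinuousLinearMap.le_opNorm _ _
      _ ≤ 1 * (‖K‖ * ‖C (exp (s • B) x)‖) :=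
          mul_le_mul (hcontr _ ⟨sub_nonneg.2 hs.2, by linarith [hs.1]⟩) (K.le_opNorm _)
            (norm_nonneg _) zero_le_one
      _ = ‖K‖ * ‖C (exp (s • B) x)‖ := one_mul _
  have hint : ‖∫ s in (0 : ℝ)..t, G s x‖ ≤ ‖K‖ * ∫ s in (0 : ℝ)..t, ‖C (exp (s • B) x)‖ := by
    rw [← intervalIntegral.integral_const_mul]
    refine (intervalIntegral.norm_integral_le_integral_norm ht).trans
      (intervalIntegral.integral_mono_on ht ?_ ?_ hGx)
    · exact (hG.clm_apply continuous_const).norm.intervalIntegrable 0 t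
    · exact (continuous_const.mul (C.continuous.comp
        ((continuous_exp_smul B).clm_apply continuous_const)).norm).intervalIntegrable 0 t
  calc ‖C (exp (t • A) x)‖ ≤ ‖C (exp (t • B) x)‖ + ‖C (∫ s in (0 : ℝ)..t, G s x)‖ := by
        rw [hduhamel, map_add]; exact norm_add_le _ _
    _ ≤ ‖C (exp (t • B) x)‖ + ‖C‖ * (‖K‖ * ∫ s in (0 : ℝ)..t, ‖C (exp (s • B) x)‖) := by
        gcongr; exact (C.le_opNorm _).trans (by gcongr)
    _ = _ := by ring

theorem stmt_0_general
    {X : Type*} [NormedAddCommGroup X] [InnerProductSpace ℝ X] [CompleteSpace X]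
    {Y : Type*} [NormedAddCommGroup Y] [InnerProductSpace ℝ Y]
    (A : X →L[ℝ] X) (C : X →L[ℝ] Y) (K : Y →L[ℝ] X)
    (T γ₀ : ℝ) (hT : 0 < T)
    (hcontr : ∀ t ∈ Set.Icc (0 : ℝ) T, ‖exp (t • A)‖ ≤ 1)
    (hobs : ∀ x : X, γ₀ ^ 2 * ‖x‖ ^ 2 ≤ ∫ t in (0 : ℝ)..T, ‖C (exp (t • A) x)‖ ^ 2) :
    ∀ x : X,
      (γ₀ * Real.sqrt 2 / (Real.sqrt 2 + T * ‖C‖ * ‖K‖)) ^ 2 * ‖x‖ ^ 2 ≤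
        ∫ t in (0 : ℝ)..T, ‖C (exp (t • (A - K ∘L C)) x)‖ ^ 2 := by
  intro x
  have hout : ∀ B : X →L[ℝ] X, Continuous fun t : ℝ => ‖C (exp (t • B) x)‖ := fun B =>
    (C.continuous.comp ((continuous_exp_smul B).clm_apply continuous_const)).norm
  have hL2 := sqrt_intervalIntegral_sq_le_of_le_add_primitive (hout A) (hout (A - K ∘L C))
    (fun _ => norm_nonneg _) (by positivity) hT.le fun t ht =>
      norm_apply_exp_smul_le_of_feedback A C K x ht.1 fun s hs => hcontr s ⟨hs.1, hs.2.trans ht.2⟩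
  have hobs' : |γ₀ * ‖x‖| ≤ √(∫ t in (0 : ℝ)..T, ‖C (exp (t • A) x)‖ ^ 2) :=
    Real.abs_le_sqrt (by rw [mul_pow]; exact hobs x)
  have hγ : γ₀ * √2 / (√2 + T * ‖C‖ * ‖K‖) = γ₀ / (1 + ‖C‖ * ‖K‖ * T / √2) := by
    field_simp
  have hkey : |γ₀ / (1 + ‖C‖ * ‖K‖ * T / √2) * ‖x‖| ≤
      √(∫ t in (0 : ℝ)..T, ‖C (exp (t • (A - K ∘L C)) x)‖ ^ 2) := by
    have hpos : 0 < 1 + ‖C‖ * ‖K‖ * T / √2 := by positivity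
    rw [div_mul_eq_mul_div, abs_div, abs_of_pos hpos, div_le_iff₀ hpos]
    linarith
  rw [hγ, ← mul_pow,
    ← Real.sq_sqrt (intervalIntegral.integral_nonneg hT.le fun _ _ => sq_nonneg _)]
  exact sq_le_sq.2 (hkey.trans (le_abs_self _))

/-- Lemma 2.1: preservation of exact observability under bounded output feedback. -/
theorem stmt_0
    {X : Type*} [NormedAddCommGroup X] [InnerProductSpace ℝ X] [CompleteSpace X]
    {Y : Type*} [NormedAddCommGroup Y] [InnerProductSpace ℝ Y] [CompleteSpace Y]
    (A : X →L[ℝ] X) (C : X →L[ℝ] Y) (K : Y →L[ℝ] X)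
    (T γ₀ : ℝ) (hT : 0 < T) (hγ₀ : 0 < γ₀)
    (hcontr : ∀ t ∈ Set.Icc (0 : ℝ) T, ‖exp (t • A)‖ ≤ 1)
    (hobs : ∀ x : X, γ₀ ^ 2 * ‖x‖ ^ 2 ≤ ∫ t in (0 : ℝ)..T, ‖C (exp (t • A) x)‖ ^ 2) :
    ∀ x : X,
      (γ₀ * Real.sqrt 2 / (Real.sqrt 2 + T * ‖C‖ * ‖K‖)) ^ 2 * ‖x‖ ^ 2 ≤
        ∫ t in (0 : ℝ)..T, ‖C (exp (t • (A - K ∘L C)) x)‖ ^ 2 :=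
  stmt_0_general A C K T γ₀ hT hcontr hobs
end

section
/- Let X, Θ and Z be real Hilbert spaces. Let S : X → Z, P : Θ → Z and U₀ : Θ → Θ be bounded linear operators with U₀ self-adjoint. Assume there exist γ > 0 and δ > 0 such that ‖Sx‖_Z ≥ γ‖x‖_X for all x ∈ X and ⟨θ, U₀θ⟩_Θ ≥ δ‖θ‖²_Θ for all θ ∈ Θ. Then for all x ∈ X and θ ∈ Θ, ‖Sx + Pθ‖²_Z + ⟨θ, U₀θ⟩_Θ ≥ ε (‖x‖²_X + ‖θ‖²_Θ), where ε = (1/2)·min(δ, γ²δ/(‖P‖² + δ)). -/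
open scoped RealInnerProductSpace

lemma aux_real (γ δ N u p s xx T q m : ℝ) (hγ : 0 < γ) (hδ : 0 < δ)
    (hN : 0 ≤ N) (hu : 0 ≤ u) (hp : 0 ≤ p) (hxx : 0 ≤ xx) (hT : 0 ≤ T)
    (hγx : γ * xx ≤ s) (hs : s ≤ u + p) (hpθ : p ≤ N * T) (hq : δ * T ^ 2 ≤ q)
    (hm : m = min δ (γ ^ 2 * δ / (N ^ 2 + δ))) :
    1 / 2 * m * (xx ^ 2 + T ^ 2) ≤ u ^ 2 + q := by
  have hden : 0 < N ^ 2 + δ := by positivity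
  have hden2 : 0 < 2 * N ^ 2 + δ := by positivity
  have hm1 : m ≤ δ := hm ▸ min_le_left _ _
  have hm2 : m * (N ^ 2 + δ) ≤ γ ^ 2 * δ := by
    have h := hm ▸ min_le_right δ (γ ^ 2 * δ / (N ^ 2 + δ))
    calc m * (N ^ 2 + δ) ≤ (γ ^ 2 * δ / (N ^ 2 + δ)) * (N ^ 2 + δ) :=
          mul_le_mul_of_nonneg_right h hden.le
      _ = γ ^ 2 * δ := by field_simp
  have hA : (γ * xx) ^ 2 ≤ (u + p) ^ 2 := by
    have h1 : γ * xx ≤ u + p := hγx.trans hs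
    nlinarith [mul_nonneg hγ.le hxx]
  have hp2 : p ^ 2 ≤ N ^ 2 * T ^ 2 := by nlinarith
  have h1 : δ * (2 * N ^ 2 + δ) * (γ ^ 2 * xx ^ 2) ≤
      2 * (N ^ 2 + δ) * ((2 * N ^ 2 + δ) * u ^ 2 + δ * p ^ 2) := by
    nlinarith [sq_nonneg ((2 * N ^ 2 + δ) * u - δ * p),
      mul_le_mul_of_nonneg_left hA (mul_pos hδ hden2).le]
  have h3 : 2 * (N ^ 2 + δ) * (δ * p ^ 2) ≤ 2 * (N ^ 2 + δ) * (δ * (N ^ 2 * T ^ 2)) :=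
    mul_le_mul_of_nonneg_left (mul_le_mul_of_nonneg_left hp2 hδ.le) (by positivity)
  have h2 : m * (N ^ 2 + δ) * ((2 * N ^ 2 + δ) * xx ^ 2) ≤
      γ ^ 2 * δ * ((2 * N ^ 2 + δ) * xx ^ 2) :=
    mul_le_mul_of_nonneg_right hm2 (by positivity)
  have hmx : m * (N ^ 2 + δ) * ((2 * N ^ 2 + δ) * xx ^ 2) ≤
      2 * (N ^ 2 + δ) * ((2 * N ^ 2 + δ) * u ^ 2 + δ * (N ^ 2 * T ^ 2)) := by
    nlinarith [h1, h2, h3]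
  have hmt : (N ^ 2 + δ) * (2 * N ^ 2 + δ) * (m * T ^ 2) ≤
      (N ^ 2 + δ) * (2 * N ^ 2 + δ) * (δ * T ^ 2) :=
    mul_le_mul_of_nonneg_left (mul_le_mul_of_nonneg_right hm1 (sq_nonneg T)) (by positivity)
  have hq' : 2 * ((N ^ 2 + δ) * (2 * N ^ 2 + δ)) * (δ * T ^ 2) ≤
      2 * ((N ^ 2 + δ) * (2 * N ^ 2 + δ)) * q :=
    mul_le_mul_of_nonneg_left hq (by positivity)
  have hgap : 0 ≤ (N ^ 2 + δ) * δ ^ 2 * T ^ 2 := by positivity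
  have hfac : 0 < (N ^ 2 + δ) * (2 * N ^ 2 + δ) := mul_pos hden hden2
  have key : (N ^ 2 + δ) * (2 * N ^ 2 + δ) * (m * (xx ^ 2 + T ^ 2)) ≤
      (N ^ 2 + δ) * (2 * N ^ 2 + δ) * (2 * u ^ 2 + 2 * q) := by
    linarith [hmx, hmt, hq', hgap]
  have := le_of_mul_le_mul_left key hfac
  linarith

/-- Coercivity estimate for the block operator Γ (core of Lemma 2.2). -/
theorem stmt_3
    {X : Type*} [NormedAddCommGroup X] [InnerProductSpace ℝ X] [CompleteSpace X]
    {Θ : Type*} [NormedAddCommGroup Θ] [InnerProductSpace ℝ Θ] [CompleteSpace Θ]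
    {Z : Type*} [NormedAddCommGroup Z] [InnerProductSpace ℝ Z] [CompleteSpace Z]
    (S : X →L[ℝ] Z) (P : Θ →L[ℝ] Z) (U₀ : Θ →L[ℝ] Θ)
    (hU₀sa : ContinuousLinearMap.adjoint U₀ = U₀)
    (γ δ : ℝ) (hγ : 0 < γ) (hδ : 0 < δ)
    (hS : ∀ x : X, γ * ‖x‖ ≤ ‖S x‖)
    (hU₀ : ∀ θ : Θ, δ * ‖θ‖ ^ 2 ≤ ⟪θ, U₀ θ⟫) :
    ∀ (x : X) (θ : Θ),
      (1 / 2) * min δ (γ ^ 2 * δ / (‖P‖ ^ 2 + δ)) * (‖x‖ ^ 2 + ‖θ‖ ^ 2) ≤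
        ‖S x + P θ‖ ^ 2 + ⟪θ, U₀ θ⟫ := by
  intro x θ
  have hs : ‖S x‖ ≤ ‖S x + P θ‖ + ‖P θ‖ := by
    calc ‖S x‖ = ‖(S x + P θ) - P θ‖ := by rw [add_sub_cancel_right]
      _ ≤ ‖S x + P θ‖ + ‖P θ‖ := norm_sub_le _ _
  exact aux_real γ δ ‖P‖ ‖S x + P θ‖ ‖P θ‖ ‖S x‖ ‖x‖ ‖θ‖ ⟪θ, U₀ θ⟫ _ hγ hδ
    (norm_nonneg _) (norm_nonneg _) (norm_nonneg _) (norm_nonneg _) (norm_nonneg _)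
    (hS x) hs (P.le_opNorm θ) (hU₀ θ) rfl
end

section
/- Let X, Y and Θ be real Hilbert spaces, let A : X → X and C : X → Y be bounded linear operators, T > 0, κ ≥ 0, and γ₀ > 0. Assume ‖exp(tA)‖ ≤ 1 for all t ≥ 0 and that ∫₀^T ‖C (exp(tA) x)‖²_Y dt ≥ γ₀² ‖x‖²_X for all x ∈ X. Let U₀ : Θ → Θ be bounded, self-adjoint with ⟨θ, U₀θ⟩ ≥ δ‖θ‖² for all θ and some δ > 0, let θ₀ ∈ Θ, let y : [0,T] → Y be strongly measurable with ∫₀^T ‖y(t)‖² dt < ∞, and let B : [0,T] → L(Θ,X) be strongly measurable with ∫₀^T ‖B(s)‖² ds < ∞. Define the observer trajectory ẑ[ξ,ζ](t) = exp(t(A − κC*C)) ζ + ∫₀^t exp((t−s)(A − κC*C)) (B(s)ξ + κ C* y(s)) ds and the cost J(ξ,ζ) = ⟨ξ − θ₀, U₀(ξ − θ₀)⟩_Θ + ∫₀^T ‖y(t) − C ẑ[ξ,ζ](t)‖²_Y dt. Then J is strictly convex on Θ × X: for all (ξ₁,ζ₁) ≠ (ξ₂,ζ₂) and all t ∈ (0,1),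 J(t ξ₁ + (1−t) ξ₂, t ζ₁ + (1−t) ζ₂) < t J(ξ₁,ζ₁) + (1−t) J(ξ₂,ζ₂). -/
open MeasureTheory NormedSpace
open scoped RealInnerProductSpace

/-!
The observer trajectory `ẑ[ξ, ζ]` is affine in `(ξ, ζ)`, so `J` is quadratic: for `p = (ξ₁, ζ₁)`,
`p' = (ξ₂, ζ₂)` one has `J (t p + (1 - t) p') = t J p + (1 - t) J p' - t (1 - t) q` with
`q = ⟪ξ₁ - ξ₂, U₀ (ξ₁ - ξ₂)⟫ + ∫₀ᵀ ‖C (ẑ[ξ₁, ζ₁] - ẑ[ξ₂, ζ₂])‖²`, and it remains to show `q > 0`.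
If `ξ₁ ≠ ξ₂` this is coercivity of `U₀`. If `ξ₁ = ξ₂`, the integrand is
`‖C (exp (s (A - κ C* C)) (ζ₁ - ζ₂))‖²`; were it zero on `[0, T]`, the output injection `κ C* C`
would vanish along this trajectory, which would then be the free trajectory `exp (s A) (ζ₁ - ζ₂)`,
contradicting observability.
-/

section InnerProduct

variable {E : Type*} [NormedAddCommGroup E] [InnerProductSpace ℝ E]

theorem LinearMap.IsSymmetric.inner_map_self_convex_combination {U : E →ₗ[ℝ] E}
    (hU : U.IsSymmetric) (a b : E) (t : ℝ) :
    ⟪t • a + (1 - t) • b, U (t • a + (1 - t) • b)⟫ =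
      t * ⟪a, U a⟫ + (1 - t) * ⟪b, U b⟫ - t * (1 - t) * ⟪a - b, U (a - b)⟫ := by
  have hba : ⟪b, U a⟫ = ⟪a, U b⟫ := by rw [real_inner_comm, hU]
  simp only [map_add, map_smul, map_sub, inner_add_left, inner_add_right, inner_sub_left,
    inner_sub_right, real_inner_smul_left, real_inner_smul_right, hba]
  ring

theorem norm_sq_convex_combination (a b : E) (t : ℝ) :
    ‖t • a + (1 - t) • b‖ ^ 2 = t * ‖a‖ ^ 2 + (1 - t) * ‖b‖ ^ 2 - t * (1 - t) * ‖a - b‖ ^ 2 := by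
  simpa only [LinearMap.id_apply, real_inner_self_eq_norm_sq] using
    LinearMap.IsSymmetric.id.inner_map_self_convex_combination a b t

theorem integral_norm_sq_convex_combination {α : Type*} [MeasurableSpace α] {μ : Measure α}
    {f g : α → E} (hf : MemLp f 2 μ) (hg : MemLp g 2 μ) (t : ℝ) :
    ∫ x, ‖t • f x + (1 - t) • g x‖ ^ 2 ∂μ =
      t * ∫ x, ‖f x‖ ^ 2 ∂μ + (1 - t) * ∫ x, ‖g x‖ ^ 2 ∂μ -
        t * (1 - t) * ∫ x, ‖f x - g x‖ ^ 2 ∂μ := by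
  have hf2 := hf.integrable_norm_pow two_ne_zero
  have hg2 := hg.integrable_norm_pow two_ne_zero
  have hfg2 : Integrable (fun x => ‖f x - g x‖ ^ 2) μ := (hf.sub hg).integrable_norm_pow two_ne_zero
  simp only [norm_sq_convex_combination]
  rw [integral_sub (by fun_prop) (by fun_prop), integral_add (by fun_prop) (by fun_prop),
    integral_const_mul, integral_const_mul, integral_const_mul]

end InnerProduct

section Integrability

variable {F : Type*} [NormedAddCommGroup F]

open Set in
theorem IntervalIntegrable.continuousOn_clm_apply {E : Type*} [NormedAddCommGroup E]
    [NormedSpace ℝ E] [NormedSpace ℝ F] {μ : Measure ℝ} {K : ℝ → E →L[ℝ] F} {f : ℝ → E}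
    {a b : ℝ} (hf : IntervalIntegrable f μ a b) (hK : ContinuousOn K (uIcc a b)) :
    IntervalIntegrable (fun r => K r (f r)) μ a b := by
  obtain ⟨c, hc⟩ := isCompact_uIcc.exists_bound_of_continuousOn hK
  rw [intervalIntegrable_iff] at hf ⊢
  have hKm : AEStronglyMeasurable K (μ.restrict (uIoc a b)) :=
    (hK.mono uIoc_subset_uIcc).aestronglyMeasurable measurableSet_uIoc
  refine (hf.norm.const_mul c).mono'
    (isBoundedBilinearMap_apply.continuous.comp_aestronglyMeasurable (hKm.prodMk hf.1)) ?_
  filter_upwards [ae_restrict_mem measurableSet_uIoc] with r hr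
  exact (K r).le_of_opNorm_le (hc r (uIoc_subset_uIcc hr)) (f r)

theorem memLp_two_restrict_Ioc {g : ℝ → F} {a b : ℝ} (hab : a ≤ b)
    (hg : AEStronglyMeasurable g (volume.restrict (Set.Ioc a b)))
    (hg2 : IntervalIntegrable (fun s => ‖g s‖ ^ 2) volume a b) :
    MemLp g 2 (volume.restrict (Set.Ioc a b)) :=
  (memLp_two_iff_integrable_sq_norm hg).2
    ((intervalIntegrable_iff_integrableOn_Ioc_of_le hab).1 hg2)

theorem MemLp.intervalIntegrable {g : ℝ → F} {a b : ℝ} {p : ENNReal} (hab : a ≤ b) (hp : 1 ≤ p)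
    (hg : MemLp g p (volume.restrict (Set.Ioc a b))) : IntervalIntegrable g volume a b :=
  (intervalIntegrable_iff_integrableOn_Ioc_of_le hab).2 (hg.integrable hp)

theorem ContinuousOn.memLp_restrict_Ioc {g : ℝ → F} {a b : ℝ}
    (hg : ContinuousOn g (Set.Icc a b)) (p : ENNReal) :
    MemLp g p (volume.restrict (Set.Ioc a b)) := by
  obtain ⟨c, hc⟩ := isCompact_Icc.exists_bound_of_continuousOn hg
  exact .of_bound ((hg.mono Set.Ioc_subset_Icc_self).aestronglyMeasurable measurableSet_Ioc) c
    (ae_restrict_of_forall_mem measurableSet_Ioc fun s hs => hc s (Set.Ioc_subset_Icc_self hs))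

end Integrability

section OperatorExponential

variable {E : Type*} [NormedAddCommGroup E] [NormedSpace ℝ E] [CompleteSpace E]

theorem continuous_exp_smul_s4 (M : E →L[ℝ] E) : Continuous fun t : ℝ => exp (t • M) :=
  continuous_iff_continuousAt.2 fun t => (hasDerivAt_exp_smul_const (𝕂 := ℝ) M t).continuousAt

theorem exp_add_smul (M : E →L[ℝ] E) (s t : ℝ) :
    exp ((s + t) • M) = exp (s • M) * exp (t • M) := by
  have hball : ∀ N : E →L[ℝ] E, N ∈ Metric.eball 0 (expSeries ℝ (E →L[ℝ] E)).radius := fun N => by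
    simp [expSeries_radius_eq_top]
  rw [add_smul]
  exact exp_add_of_commute_of_mem_ball (((Commute.refl M).smul_left s).smul_right t)
    (hball _) (hball _)

theorem exp_smul_sub_apply_eq_of_forall_apply_eq_zero (A P : E →L[ℝ] E) (x : E) {τ : ℝ}
    (hτ : 0 ≤ τ) (hP : ∀ s ∈ Set.Icc 0 τ, P (exp (s • (A - P)) x) = 0) :
    exp (τ • (A - P)) x = exp (τ • A) x := by
  set v : ℝ → E := fun s => exp (s • (A - P)) x
  have hv : ∀ s, HasDerivAt v ((A - P) (v s)) s := fun s => by
    simpa using (hasDerivAt_exp_smul_const' (𝕂 := ℝ) (A - P) s).clm_apply (hasDerivAt_const s x)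
  -- `s ↦ exp ((τ - s) A) (v s)` has derivative `-exp ((τ - s) A) (P (v s)) = 0`
  have hderiv : ∀ s ∈ Set.Ico 0 τ, HasDerivAt (fun s => exp ((τ - s) • A) (v s)) 0 s := by
    intro s hs
    have hU : HasDerivAt (fun s => exp ((τ - s) • A)) (-(exp ((τ - s) • A) * A)) s := by
      simpa [Function.comp_def] using (hasDerivAt_exp_smul_const (𝕂 := ℝ) A (τ - s)).scomp s
        ((hasDerivAt_id s).const_sub τ)
    have hPs : P (v s) = 0 := hP s (Set.Ico_subset_Icc_self hs)
    convert hU.clm_apply (hv s) using 1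
    simp [hPs]
  have hcont : ContinuousOn (fun s => exp ((τ - s) • A) (v s)) (Set.Icc 0 τ) :=
    (((continuous_exp_smul_s4 A).comp (continuous_sub_left τ)).clm_apply
      ((continuous_exp_smul_s4 (A - P)).clm_apply continuous_const)).continuousOn
  simpa [v] using constant_of_has_deriv_right_zero hcont
    (fun s hs => (hderiv s hs).hasDerivWithinAt) τ (Set.right_mem_Icc.mpr hτ)

theorem intervalIntegral_norm_sq_comp_exp_smul_sub_pos {F : Type*} [NormedAddCommGroup F]
    [NormedSpace ℝ F] (A P : E →L[ℝ] E) (C : E →L[ℝ] F) {T γ : ℝ} (hT : 0 < T) (hγ : 0 < γ)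
    (hPC : ∀ w, C w = 0 → P w = 0)
    (hobs : ∀ x : E, γ ^ 2 * ‖x‖ ^ 2 ≤ ∫ t in (0 : ℝ)..T, ‖C (exp (t • A) x)‖ ^ 2)
    {x : E} (hx : x ≠ 0) :
    0 < ∫ t in (0 : ℝ)..T, ‖C (exp (t • (A - P)) x)‖ ^ 2 := by
  have hcont : Continuous fun t : ℝ => C (exp (t • (A - P)) x) :=
    C.continuous.comp ((continuous_exp_smul_s4 (A - P)).clm_apply continuous_const)
  refine intervalIntegral.integral_pos hT (hcont.norm.pow 2).continuousOn
    (fun _ _ => by positivity) ?_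
  by_contra! hzero
  have hCzero : ∀ t ∈ Set.Icc 0 T, C (exp (t • (A - P)) x) = 0 := fun t ht =>
    norm_eq_zero.1 (pow_eq_zero_iff two_ne_zero |>.1 ((hzero t ht).antisymm (by positivity)))
  have hfree : ∫ t in (0 : ℝ)..T, ‖C (exp (t • A) x)‖ ^ 2 = 0 := by
    refine (intervalIntegral.integral_congr fun t ht => ?_).trans intervalIntegral.integral_zero
    rw [Set.uIcc_of_le hT.le] at ht
    have hPt : ∀ s ∈ Set.Icc 0 t, P (exp (s • (A - P)) x) = 0 := fun s hs =>
      hPC _ (hCzero s ⟨hs.1, hs.2.trans ht.2⟩)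
    simp [← exp_smul_sub_apply_eq_of_forall_apply_eq_zero A P x ht.1 hPt, hCzero t ht]
  have hx' : 0 < ‖x‖ := norm_pos_iff.2 hx
  nlinarith [hobs x, pow_pos hγ 2, pow_pos hx' 2]

theorem IntervalIntegrable.exp_neg_smul_apply (M : E →L[ℝ] E) {f : ℝ → E} {a b : ℝ}
    (hf : IntervalIntegrable f volume a b) :
    IntervalIntegrable (fun s => exp ((-s) • M) (f s)) volume a b :=
  hf.continuousOn_clm_apply ((continuous_exp_smul_s4 M).comp continuous_neg).continuousOn

end OperatorExponential

section MildSolution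

variable {E : Type*} [NormedAddCommGroup E] [NormedSpace ℝ E] [CompleteSpace E]

noncomputable def mildSolution (M : E →L[ℝ] E) (f : ℝ → E) (ζ : E) (t : ℝ) : E :=
  exp (t • M) ζ + ∫ s in (0 : ℝ)..t, exp ((t - s) • M) (f s)

theorem mildSolution_eq_exp_smul_apply (M : E →L[ℝ] E) {f : ℝ → E} (ζ : E) {t : ℝ}
    (hf : IntervalIntegrable f volume 0 t) :
    mildSolution M f ζ t = exp (t • M) (ζ + ∫ s in (0 : ℝ)..t, exp ((-s) • M) (f s)) := by
  have hsplit : ∀ s, exp ((t - s) • M) (f s) = exp (t • M) (exp ((-s) • M) (f s)) := fun s => by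
    rw [sub_eq_add_neg, exp_add_smul]
    rfl
  rw [mildSolution, map_add, intervalIntegral.integral_congr fun s _ => hsplit s,
    ContinuousLinearMap.intervalIntegral_comp_comm _ (hf.exp_neg_smul_apply M)]

theorem continuousOn_mildSolution (M : E →L[ℝ] E) {f : ℝ → E} (ζ : E) {T : ℝ}
    (hf : IntervalIntegrable f volume 0 T) :
    ContinuousOn (mildSolution M f ζ) (Set.uIcc 0 T) := by
  refine ContinuousOn.congr ?_ fun t ht =>
    mildSolution_eq_exp_smul_apply M ζ (hf.mono_set (Set.uIcc_subset_uIcc_left ht))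
  exact (continuous_exp_smul_s4 M).continuousOn.clm_apply (continuousOn_const.add
    (intervalIntegral.continuousOn_primitive_interval' (hf.exp_neg_smul_apply M)
      Set.left_mem_uIcc))

theorem mildSolution_smul_add_smul (M : E →L[ℝ] E) {f g : ℝ → E} (ζ η : E) {t : ℝ}
    (hf : IntervalIntegrable f volume 0 t) (hg : IntervalIntegrable g volume 0 t) (a b : ℝ) :
    mildSolution M (fun s => a • f s + b • g s) (a • ζ + b • η) t =
      a • mildSolution M f ζ t + b • mildSolution M g η t := by
  have hfg : IntervalIntegrable (fun s => a • f s + b • g s) volume 0 t :=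
    (hf.smul a).add (hg.smul b)
  simp only [mildSolution_eq_exp_smul_apply M _ hfg, mildSolution_eq_exp_smul_apply M _ hf,
    mildSolution_eq_exp_smul_apply M _ hg, map_add, map_smul]
  rw [intervalIntegral.integral_add (by exact (hf.exp_neg_smul_apply M).smul a)
    (by exact (hg.exp_neg_smul_apply M).smul b), intervalIntegral.integral_smul,
    intervalIntegral.integral_smul]
  simp only [map_add, map_smul]
  module

theorem mildSolution_affine_convex_combination {Θ : Type*} [NormedAddCommGroup Θ]
    [NormedSpace ℝ Θ] (M : E →L[ℝ] E) (B : ℝ → Θ →L[ℝ] E) (v : ℝ → E) {ξ₁ ξ₂ : Θ} (ζ₁ ζ₂ : E)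
    {t : ℝ} (h₁ : IntervalIntegrable (fun s => B s ξ₁ + v s) volume 0 t)
    (h₂ : IntervalIntegrable (fun s => B s ξ₂ + v s) volume 0 t) (a : ℝ) :
    mildSolution M (fun s => B s (a • ξ₁ + (1 - a) • ξ₂) + v s) (a • ζ₁ + (1 - a) • ζ₂) t =
      a • mildSolution M (fun s => B s ξ₁ + v s) ζ₁ t +
        (1 - a) • mildSolution M (fun s => B s ξ₂ + v s) ζ₂ t := by
  rw [← mildSolution_smul_add_smul M ζ₁ ζ₂ h₁ h₂]
  congr 1
  ext s
  simp only [map_add, map_smul]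
  module

theorem memLp_sub_comp_mildSolution {F : Type*} [NormedAddCommGroup F] [NormedSpace ℝ F]
    (M : E →L[ℝ] E) (C : E →L[ℝ] F) {y : ℝ → F} {f : ℝ → E} (ζ : E) {T : ℝ} {p : ENNReal}
    (hT : 0 ≤ T) (hy : MemLp y p (volume.restrict (Set.Ioc 0 T)))
    (hf : IntervalIntegrable f volume 0 T) :
    MemLp (fun s => y s - C (mildSolution M f ζ s)) p (volume.restrict (Set.Ioc 0 T)) := by
  refine hy.sub (ContinuousOn.memLp_restrict_Ioc ?_ p)
  rw [← Set.uIcc_of_le hT]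
  exact C.continuous.comp_continuousOn (continuousOn_mildSolution M ζ hf)

omit [CompleteSpace E] in
theorem mildSolution_sub_mildSolution (M : E →L[ℝ] E) (f : ℝ → E) (ζ η : E) (t : ℝ) :
    mildSolution M f ζ t - mildSolution M f η t = exp (t • M) (ζ - η) := by
  simp only [mildSolution, map_sub]
  abel

theorem inner_add_integral_norm_sq_sub_mildSolution_pos {Θ F : Type*} [NormedAddCommGroup Θ]
    [InnerProductSpace ℝ Θ] [NormedAddCommGroup F] [NormedSpace ℝ F] (A P : E →L[ℝ] E)
    (C : E →L[ℝ] F) (U : Θ →L[ℝ] Θ) (f : Θ → ℝ → E) {T γ δ : ℝ} (hT : 0 < T) (hγ : 0 < γ)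
    (hδ : 0 < δ) (hPC : ∀ w, C w = 0 → P w = 0)
    (hobs : ∀ x : E, γ ^ 2 * ‖x‖ ^ 2 ≤ ∫ t in (0 : ℝ)..T, ‖C (exp (t • A) x)‖ ^ 2)
    (hU : ∀ θ : Θ, δ * ‖θ‖ ^ 2 ≤ ⟪θ, U θ⟫) {ξ₁ ξ₂ : Θ} {ζ₁ ζ₂ : E}
    (hne : (ξ₁, ζ₁) ≠ (ξ₂, ζ₂)) :
    0 < ⟪ξ₁ - ξ₂, U (ξ₁ - ξ₂)⟫ + ∫ s in Set.Ioc 0 T,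
      ‖C (mildSolution (A - P) (f ξ₂) ζ₂ s) - C (mildSolution (A - P) (f ξ₁) ζ₁ s)‖ ^ 2 := by
  have hint : 0 ≤ ∫ s in Set.Ioc 0 T,
      ‖C (mildSolution (A - P) (f ξ₂) ζ₂ s) - C (mildSolution (A - P) (f ξ₁) ζ₁ s)‖ ^ 2 :=
    integral_nonneg fun _ => by positivity
  rcases eq_or_ne ξ₁ ξ₂ with rfl | hξ
  · have hζ : ζ₂ - ζ₁ ≠ 0 := sub_ne_zero.2 fun h => hne (by rw [h])
    simp only [← map_sub, mildSolution_sub_mildSolution, sub_self, map_zero, inner_zero_left,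
      zero_add, ← intervalIntegral.integral_of_le hT.le]
    exact intervalIntegral_norm_sq_comp_exp_smul_sub_pos A P C hT hγ hPC hobs hζ
  · have hδξ : 0 < δ * ‖ξ₁ - ξ₂‖ ^ 2 := by
      have := norm_pos_iff.2 (sub_ne_zero.2 hξ)
      positivity
    linarith [hU (ξ₁ - ξ₂)]

end MildSolution

theorem stmt_4_general
    {X : Type*} [NormedAddCommGroup X] [InnerProductSpace ℝ X] [CompleteSpace X]
    {Y : Type*} [NormedAddCommGroup Y] [InnerProductSpace ℝ Y] [CompleteSpace Y]
    {Θ : Type*} [NormedAddCommGroup Θ] [InnerProductSpace ℝ Θ] [CompleteSpace Θ]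
    (A : X →L[ℝ] X) (C : X →L[ℝ] Y) (T κ γ₀ : ℝ)
    (hT : 0 < T) (hγ₀ : 0 < γ₀)
    (hobs : ∀ x : X, γ₀ ^ 2 * ‖x‖ ^ 2 ≤ ∫ t in (0 : ℝ)..T, ‖C (exp (t • A) x)‖ ^ 2)
    (U₀ : Θ →L[ℝ] Θ) (hU₀sa : ContinuousLinearMap.adjoint U₀ = U₀)
    (δ : ℝ) (hδ : 0 < δ) (hU₀ : ∀ θ : Θ, δ * ‖θ‖ ^ 2 ≤ ⟪θ, U₀ θ⟫)
    (θ₀ : Θ)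
    (y : ℝ → Y)
    (hy_meas : AEStronglyMeasurable y (volume.restrict (Set.Ioc (0 : ℝ) T)))
    (hy_L2 : IntervalIntegrable (fun t => ‖y t‖ ^ 2) volume 0 T)
    (B : ℝ → Θ →L[ℝ] X)
    (hB_meas : AEStronglyMeasurable B (volume.restrict (Set.Ioc (0 : ℝ) T)))
    (hB_L2 : IntervalIntegrable (fun s => ‖B s‖ ^ 2) volume 0 T) :
    -- the observer trajectory and the cost
    let Acl : X →L[ℝ] X := A - κ • (ContinuousLinearMap.adjoint C ∘L C)
    let zhat : Θ → X → ℝ → X := fun ξ ζ t =>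
      exp (t • Acl) ζ +
        ∫ s in (0 : ℝ)..t,
          exp ((t - s) • Acl) (B s ξ + κ • ContinuousLinearMap.adjoint C (y s))
    let J : Θ → X → ℝ := fun ξ ζ =>
      ⟪ξ - θ₀, U₀ (ξ - θ₀)⟫ + ∫ t in (0 : ℝ)..T, ‖y t - C (zhat ξ ζ t)‖ ^ 2
    -- strict convexity
    ∀ (ξ₁ ξ₂ : Θ) (ζ₁ ζ₂ : X), (ξ₁, ζ₁) ≠ (ξ₂, ζ₂) → ∀ t : ℝ, t ∈ Set.Ioo (0 : ℝ) 1 →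
      J (t • ξ₁ + (1 - t) • ξ₂) (t • ζ₁ + (1 - t) • ζ₂) <
        t * J ξ₁ ζ₁ + (1 - t) * J ξ₂ ζ₂ := by
  intro Acl zhat J ξ₁ ξ₂ ζ₁ ζ₂ hne t ht
  set μ := volume.restrict (Set.Ioc (0 : ℝ) T)
  set v : ℝ → X := fun s => κ • ContinuousLinearMap.adjoint C (y s)
  set e : Θ → X → ℝ → Y := fun ξ ζ s => y s - C (zhat ξ ζ s)
  have hz : ∀ ξ ζ, zhat ξ ζ = mildSolution Acl (fun s => B s ξ + v s) ζ := fun _ _ => rfl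
  have hy : MemLp y 2 μ := memLp_two_restrict_Ioc hT.le hy_meas hy_L2
  have hB : MemLp B 2 μ := memLp_two_restrict_Ioc hT.le hB_meas hB_L2
  have hf : ∀ ξ, IntervalIntegrable (fun s => B s ξ + v s) volume 0 T := fun ξ =>
    MemLp.intervalIntegrable hT.le one_le_two <|
      ((ContinuousLinearMap.apply ℝ X ξ).comp_memLp' hB).add
        (((ContinuousLinearMap.adjoint C).comp_memLp' hy).const_smul κ)
  have he : ∀ ξ ζ, MemLp (e ξ ζ) 2 μ := fun ξ ζ =>
    memLp_sub_comp_mildSolution Acl C ζ hT.le hy (hf ξ)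
  have hJ : ∀ ξ ζ, J ξ ζ = ⟪ξ - θ₀, U₀ (ξ - θ₀)⟫ + ∫ s, ‖e ξ ζ s‖ ^ 2 ∂μ := fun _ _ =>
    congrArg _ (intervalIntegral.integral_of_le hT.le)
  have hcombo : ∫ s, ‖e (t • ξ₁ + (1 - t) • ξ₂) (t • ζ₁ + (1 - t) • ζ₂) s‖ ^ 2 ∂μ =
      ∫ s, ‖t • e ξ₁ ζ₁ s + (1 - t) • e ξ₂ ζ₂ s‖ ^ 2 ∂μ := by
    refine setIntegral_congr_fun measurableSet_Ioc fun s hs => ?_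
    have hsT := Set.uIcc_subset_uIcc_left (Set.uIcc_of_le hT.le ▸ Set.Ioc_subset_Icc_self hs)
    simp only [e, hz]
    rw [mildSolution_affine_convex_combination Acl B v ζ₁ ζ₂ ((hf ξ₁).mono_set hsT)
      ((hf ξ₂).mono_set hsT), map_add, map_smul, map_smul]
    congr 2
    module
  have hgap : 0 < ⟪ξ₁ - ξ₂, U₀ (ξ₁ - ξ₂)⟫ + ∫ s, ‖e ξ₁ ζ₁ s - e ξ₂ ζ₂ s‖ ^ 2 ∂μ := by
    simpa only [e, hz, sub_sub_sub_cancel_left] using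
      inner_add_integral_norm_sq_sub_mildSolution_pos A _ C U₀ (fun ξ s => B s ξ + v s) hT hγ₀
        hδ (fun w hw => by simp [hw]) hobs hU₀ hne
  have hquad := (ContinuousLinearMap.isSelfAdjoint_iff_isSymmetric.1 hU₀sa
    ).inner_map_self_convex_combination (ξ₁ - θ₀) (ξ₂ - θ₀) t
  simp only [ContinuousLinearMap.coe_coe, sub_sub_sub_cancel_right] at hquad
  rw [hJ, hJ, hJ, hcombo, integral_norm_sq_convex_combination (he _ _) (he _ _),
    show t • ξ₁ + (1 - t) • ξ₂ - θ₀ = t • (ξ₁ - θ₀) + (1 - t) • (ξ₂ - θ₀) by module, hquad]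
  nlinarith [mul_pos ht.1 (sub_pos.2 ht.2)]

/-- Lemma 2.2: strict convexity of the regularized output-error cost functional. -/
theorem stmt_4
    {X : Type*} [NormedAddCommGroup X] [InnerProductSpace ℝ X] [CompleteSpace X]
    {Y : Type*} [NormedAddCommGroup Y] [InnerProductSpace ℝ Y] [CompleteSpace Y]
    {Θ : Type*} [NormedAddCommGroup Θ] [InnerProductSpace ℝ Θ] [CompleteSpace Θ]
    (A : X →L[ℝ] X) (C : X →L[ℝ] Y) (T κ γ₀ : ℝ)
    (hT : 0 < T) (hκ : 0 ≤ κ) (hγ₀ : 0 < γ₀)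
    (hcontr : ∀ t : ℝ, 0 ≤ t → ‖exp (t • A)‖ ≤ 1)
    (hobs : ∀ x : X, γ₀ ^ 2 * ‖x‖ ^ 2 ≤ ∫ t in (0 : ℝ)..T, ‖C (exp (t • A) x)‖ ^ 2)
    (U₀ : Θ →L[ℝ] Θ) (hU₀sa : ContinuousLinearMap.adjoint U₀ = U₀)
    (δ : ℝ) (hδ : 0 < δ) (hU₀ : ∀ θ : Θ, δ * ‖θ‖ ^ 2 ≤ ⟪θ, U₀ θ⟫)
    (θ₀ : Θ)
    (y : ℝ → Y)
    (hy_meas : AEStronglyMeasurable y (volume.restrict (Set.Ioc (0 : ℝ) T)))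
    (hy_L2 : IntervalIntegrable (fun t => ‖y t‖ ^ 2) volume 0 T)
    (B : ℝ → Θ →L[ℝ] X)
    (hB_meas : AEStronglyMeasurable B (volume.restrict (Set.Ioc (0 : ℝ) T)))
    (hB_L2 : IntervalIntegrable (fun s => ‖B s‖ ^ 2) volume 0 T) :
    -- the observer trajectory and the cost
    let Acl : X →L[ℝ] X := A - κ • (ContinuousLinearMap.adjoint C ∘L C)
    let zhat : Θ → X → ℝ → X := fun ξ ζ t =>
      exp (t • Acl) ζ +
        ∫ s in (0 : ℝ)..t,
          exp ((t - s) • Acl) (B s ξ + κ • ContinuousLinearMap.adjoint C (y s))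
    let J : Θ → X → ℝ := fun ξ ζ =>
      ⟪ξ - θ₀, U₀ (ξ - θ₀)⟫ + ∫ t in (0 : ℝ)..T, ‖y t - C (zhat ξ ζ t)‖ ^ 2
    -- strict convexity
    ∀ (ξ₁ ξ₂ : Θ) (ζ₁ ζ₂ : X), (ξ₁, ζ₁) ≠ (ξ₂, ζ₂) → ∀ t : ℝ, t ∈ Set.Ioo (0 : ℝ) 1 →
      J (t • ξ₁ + (1 - t) • ξ₂) (t • ζ₁ + (1 - t) • ζ₂) <
        t * J ξ₁ ζ₁ + (1 - t) * J ξ₂ ζ₂ :=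
  stmt_4_general A C T κ γ₀ hT hγ₀ hobs U₀ hU₀sa δ hδ hU₀ θ₀ y hy_meas hy_L2 B hB_meas hB_L2
end

section
/- Let X, Y and Θ be real Hilbert spaces, A : X → X bounded with ‖exp(tA)‖ ≤ 1 for all t ∈ [0,T], C : X → Y bounded, T > 0. Assume exact observability: ∫₀^T ‖C (exp(tA) x)‖²_Y dt ≥ γ² ‖x‖²_X for all x ∈ X and some γ > 0. Let U₀ : Θ → Θ be bounded self-adjoint with ⟨θ,U₀θ⟩ ≥ δ‖θ‖² for some δ > 0, and let B : [0,T] → L(Θ,X) be strongly measurable with 0 < L := T‖C‖(∫₀^T ‖B(s)‖² ds)^{1/2}. Define Π(t)ξ = ∫₀^t exp((t−s)A) B(s)ξ ds. Then for every Δζ ∈ X and every ξ ∈ Θ, 2⟨ξ, U₀ξ⟩_Θ + 2∫₀^T ‖C(exp(tA)Δζ) + CΠ(t)ξ‖²_Y dt ≥ min(δ/L², 1) · γ² · ‖Δζ‖²_X. -/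
/-!
Write `a t = C (exp (t • A) Δζ)` and `b t = C (Π t ξ)` with `Π = sensitivity A B`.
Observability bounds `γ² ‖Δζ‖²` by `∫ ‖a‖² ≤ 2 ∫ ‖a + b‖² + 2 ∫ ‖b‖²`. Since the semigroup is
contractive, `‖Π t‖ ≤ ∫₀ᵀ ‖B‖`, and Cauchy–Schwarz turns this into `∫ ‖b‖² ≤ L² ‖ξ‖²`.
Multiplying by `m = min (δ / L²) 1`, the term `m L² ‖ξ‖² ≤ δ ‖ξ‖²` is absorbed by the coercivity
of `U₀`. The integrals are meaningful because `Π t = exp (t • A) ∘ ∫₀ᵗ exp (-s • A) ∘ B s` is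
continuous in `t`.
-/

open MeasureTheory NormedSpace Set
open scoped RealInnerProductSpace

theorem exp_sub_smul_eq_mul {𝔸 : Type*} [NormedRing 𝔸] [NormedAlgebra ℝ 𝔸] [CompleteSpace 𝔸]
    (A : 𝔸) (t s : ℝ) : exp ((t - s) • A) = exp (t • A) * exp ((-s) • A) := by
  let : NormedAlgebra ℚ 𝔸 := NormedAlgebra.restrictScalars ℚ ℝ 𝔸
  rw [sub_eq_add_neg, add_smul]
  exact exp_add_of_commute (((Commute.refl A).smul_left t).smul_right (-s))

theorem sq_integral_le_measureReal_mul_integral_sq {α : Type*} [MeasurableSpace α]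
    {μ : Measure α} [IsFiniteMeasure μ] {f : α → ℝ} (hf₀ : 0 ≤ᵐ[μ] f) (hf : MemLp f 2 μ) :
    (∫ x, f x ∂μ) ^ 2 ≤ μ.real univ * ∫ x, f x ^ 2 ∂μ := by
  have holder := integral_mul_le_Lp_mul_Lq_of_nonneg Real.HolderConjugate.two_two hf₀
    (ae_of_all _ fun _ => zero_le_one) (by simpa using hf) (memLp_const (1 : ℝ))
  simp only [Real.rpow_two, one_pow, mul_one, integral_const, smul_eq_mul] at holder
  rw [← Real.sqrt_eq_rpow, ← Real.sqrt_eq_rpow] at holder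
  calc (∫ x, f x ∂μ) ^ 2 ≤ (√(∫ x, f x ^ 2 ∂μ) * √(μ.real univ)) ^ 2 :=
        pow_le_pow_left₀ (integral_nonneg_of_ae hf₀) holder 2
    _ = μ.real univ * ∫ x, f x ^ 2 ∂μ := by
        rw [mul_pow, Real.sq_sqrt (integral_nonneg fun _ => sq_nonneg _),
          Real.sq_sqrt measureReal_nonneg, mul_comm]

theorem intervalIntegral_norm_sq_le_two_mul_add {E : Type*} [NormedAddCommGroup E]
    {f g : ℝ → E} {a b : ℝ} {μ : Measure ℝ} (hab : a ≤ b)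
    (hfg : IntervalIntegrable (fun x => ‖f x + g x‖ ^ 2) μ a b)
    (hg : IntervalIntegrable (fun x => ‖g x‖ ^ 2) μ a b) :
    ∫ x in a..b, ‖f x‖ ^ 2 ∂μ ≤
      2 * ∫ x in a..b, ‖f x + g x‖ ^ 2 ∂μ + 2 * ∫ x in a..b, ‖g x‖ ^ 2 ∂μ := by
  rw [← intervalIntegral.integral_const_mul, ← intervalIntegral.integral_const_mul,
    ← intervalIntegral.integral_add (hfg.const_mul 2) (hg.const_mul 2),
    intervalIntegral.integral_of_le hab, intervalIntegral.integral_of_le hab]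
  refine integral_mono_of_nonneg (ae_of_all _ fun _ => sq_nonneg _)
    ((hfg.const_mul 2).add (hg.const_mul 2)).1 (ae_of_all _ fun x => ?_)
  calc ‖f x‖ ^ 2 ≤ (‖f x + g x‖ + ‖g x‖) ^ 2 :=
        pow_le_pow_left₀ (norm_nonneg _) (norm_le_add_norm_add _ _) 2
    _ ≤ 2 * (‖f x + g x‖ ^ 2 + ‖g x‖ ^ 2) := add_sq_le
    _ = 2 * ‖f x + g x‖ ^ 2 + 2 * ‖g x‖ ^ 2 := by ring

theorem min_div_sq_one_mul_le {a J K L δ q : ℝ} (hδ : 0 ≤ δ) (hL : L ≠ 0) (hJ : 0 ≤ J)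
    (hK : 0 ≤ K) (ha : a ≤ 2 * J + 2 * (L ^ 2 * K)) (hq : δ * K ≤ q) :
    min (δ / L ^ 2) 1 * a ≤ 2 * q + 2 * J := by
  set m := min (δ / L ^ 2) 1
  have hmL : m * L ^ 2 ≤ δ :=
    calc m * L ^ 2 ≤ δ / L ^ 2 * L ^ 2 := by gcongr; exact min_le_left _ _
      _ = δ := div_mul_cancel₀ δ (pow_ne_zero 2 hL)
  calc m * a ≤ m * (2 * J + 2 * (L ^ 2 * K)) := by gcongr
    _ = 2 * (m * J) + 2 * (m * L ^ 2 * K) := by ring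
    _ ≤ 2 * J + 2 * (δ * K) := by
        gcongr
        exact mul_le_of_le_one_left hJ (min_le_right _ _)
    _ ≤ 2 * q + 2 * J := by linarith

section Sensitivity

variable {E F G : Type*} [NormedAddCommGroup E] [NormedSpace ℝ E]
  [NormedAddCommGroup F] [NormedSpace ℝ F] [NormedAddCommGroup G] [NormedSpace ℝ G]

theorem IntervalIntegrable.continuous_clm_comp {f : ℝ → E →L[ℝ] G} {g : ℝ → F →L[ℝ] E}
    {a b : ℝ} (hf : Continuous f) (hg : IntervalIntegrable g volume a b) :
    IntervalIntegrable (fun s => f s ∘L g s) volume a b := by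
  obtain ⟨M, hM⟩ := isCompact_uIcc.exists_bound_of_continuousOn hf.continuousOn
  refine (hg.norm.const_mul M).mono_fun' ?_ ?_
  · exact (ContinuousLinearMap.compL ℝ F E G).aestronglyMeasurable_comp₂
      hf.aestronglyMeasurable hg.def'.aestronglyMeasurable
  · filter_upwards [ae_restrict_mem measurableSet_uIoc] with s hs
    calc ‖f s ∘L g s‖ ≤ ‖f s‖ * ‖g s‖ := (f s).opNorm_comp_le (g s)
      _ ≤ M * ‖g s‖ := by gcongr; exact hM s (uIoc_subset_uIcc hs)

noncomputable def sensitivity (A : E →L[ℝ] E) (B : ℝ → F →L[ℝ] E) (t : ℝ) : F →L[ℝ] E :=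
  ∫ s in (0 : ℝ)..t, exp ((t - s) • A) ∘L B s

theorem norm_sensitivity_le (A : E →L[ℝ] E) {B : ℝ → F →L[ℝ] E} {t : ℝ} (ht : 0 ≤ t)
    (hA : ∀ r ∈ Icc 0 t, ‖exp (r • A)‖ ≤ 1) (hB : IntervalIntegrable (fun s => ‖B s‖) volume 0 t) :
    ‖sensitivity A B t‖ ≤ ∫ s in (0 : ℝ)..t, ‖B s‖ := by
  refine intervalIntegral.norm_integral_le_of_norm_le ht (ae_of_all _ fun s hs => ?_) hB
  exact ((exp ((t - s) • A)).opNorm_comp_le (B s)).trans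
    (mul_le_of_le_one_left (norm_nonneg _) (hA _ ⟨by linarith [hs.2], by linarith [hs.1]⟩))

theorem norm_sensitivity_le_sqrt (A : E →L[ℝ] E) {B : ℝ → F →L[ℝ] E} {T t : ℝ}
    (ht : t ∈ Icc 0 T) (hA : ∀ r ∈ Icc 0 T, ‖exp (r • A)‖ ≤ 1)
    (hB : MemLp B 2 (volume.restrict (Ioc 0 T))) :
    ‖sensitivity A B t‖ ≤ √(T * ∫ s in (0 : ℝ)..T, ‖B s‖ ^ 2) := by
  have hT : 0 ≤ T := ht.1.trans ht.2
  have hBnorm : IntervalIntegrable (fun s => ‖B s‖) volume 0 T :=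
    (intervalIntegrable_iff_integrableOn_Ioc_of_le hT).2 (hB.norm.integrable one_le_two)
  have cauchy_schwarz : (∫ s in (0 : ℝ)..T, ‖B s‖) ^ 2 ≤ T * ∫ s in (0 : ℝ)..T, ‖B s‖ ^ 2 := by
    rw [intervalIntegral.integral_of_le hT, intervalIntegral.integral_of_le hT]
    simpa [Real.volume_real_Ioc_of_le hT] using
      sq_integral_le_measureReal_mul_integral_sq (ae_of_all _ fun s => norm_nonneg (B s)) hB.norm
  calc ‖sensitivity A B t‖ ≤ ∫ s in (0 : ℝ)..t, ‖B s‖ :=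
        norm_sensitivity_le A ht.1 (fun r hr => hA r ⟨hr.1, hr.2.trans ht.2⟩)
          (hBnorm.mono_set (uIcc_subset_uIcc_left (uIcc_of_le hT ▸ ht)))
    _ ≤ ∫ s in (0 : ℝ)..T, ‖B s‖ :=
        intervalIntegral.integral_mono_interval le_rfl ht.1 ht.2
          (ae_of_all _ fun s => norm_nonneg _) hBnorm
    _ ≤ √(T * ∫ s in (0 : ℝ)..T, ‖B s‖ ^ 2) :=
        (le_abs_self _).trans (Real.abs_le_sqrt cauchy_schwarz)

theorem integral_norm_sq_sensitivity_le (A : E →L[ℝ] E) (C : E →L[ℝ] G) {B : ℝ → F →L[ℝ] E}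
    {T : ℝ} (hT : 0 ≤ T) (hA : ∀ r ∈ Icc 0 T, ‖exp (r • A)‖ ≤ 1)
    (hB : MemLp B 2 (volume.restrict (Ioc 0 T))) (ξ : F) :
    ∫ t in (0 : ℝ)..T, ‖C (sensitivity A B t ξ)‖ ^ 2 ≤
      (T * ‖C‖ * √(∫ s in (0 : ℝ)..T, ‖B s‖ ^ 2)) ^ 2 * ‖ξ‖ ^ 2 := by
  have pointwise : ∀ t ∈ uIoc 0 T,
      ‖‖C (sensitivity A B t ξ)‖ ^ 2‖ ≤ (‖C‖ * √(T * ∫ s in (0 : ℝ)..T, ‖B s‖ ^ 2) * ‖ξ‖) ^ 2 := by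
    intro t ht
    rw [uIoc_of_le hT] at ht
    rw [norm_pow, norm_norm]
    gcongr
    calc ‖C (sensitivity A B t ξ)‖ ≤ ‖C‖ * (‖sensitivity A B t‖ * ‖ξ‖) :=
          (C.le_opNorm _).trans (by gcongr; exact (sensitivity A B t).le_opNorm ξ)
      _ ≤ ‖C‖ * (√(T * ∫ s in (0 : ℝ)..T, ‖B s‖ ^ 2) * ‖ξ‖) := by
          gcongr
          exact norm_sensitivity_le_sqrt A (Ioc_subset_Icc_self ht) hA hB
      _ = _ := by ring
  calc ∫ t in (0 : ℝ)..T, ‖C (sensitivity A B t ξ)‖ ^ 2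
      ≤ ‖∫ t in (0 : ℝ)..T, ‖C (sensitivity A B t ξ)‖ ^ 2‖ := Real.le_norm_self _
    _ ≤ (‖C‖ * √(T * ∫ s in (0 : ℝ)..T, ‖B s‖ ^ 2) * ‖ξ‖) ^ 2 * |T - 0| :=
        intervalIntegral.norm_integral_le_of_norm_le_const pointwise
    _ = (T * ‖C‖ * √(∫ s in (0 : ℝ)..T, ‖B s‖ ^ 2)) ^ 2 * ‖ξ‖ ^ 2 := by
        rw [sub_zero, abs_of_nonneg hT, Real.sqrt_mul hT]
        simp only [mul_pow, Real.sq_sqrt hT]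
        ring

variable [CompleteSpace E]

theorem IntervalIntegrable.exp_neg_smul_comp (A : E →L[ℝ] E) {B : ℝ → F →L[ℝ] E} {a b : ℝ}
    (hB : IntervalIntegrable B volume a b) :
    IntervalIntegrable (fun s => exp ((-s) • A) ∘L B s) volume a b :=
  hB.continuous_clm_comp ((differentiable_exp_smul_const ℝ A).continuous.comp continuous_neg)

theorem sensitivity_eq_exp_comp (A : E →L[ℝ] E) {B : ℝ → F →L[ℝ] E} {t : ℝ}
    (hB : IntervalIntegrable B volume 0 t) :
    sensitivity A B t = exp (t • A) ∘L ∫ s in (0 : ℝ)..t, exp ((-s) • A) ∘L B s := by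
  rw [sensitivity, ← ContinuousLinearMap.compL_apply,
    ← (ContinuousLinearMap.compL ℝ F E E (exp (t • A))).intervalIntegral_comp_comm
      (hB.exp_neg_smul_comp A)]
  refine intervalIntegral.integral_congr fun s _ => ?_
  exact congrArg (· ∘L B s) (exp_sub_smul_eq_mul A t s)

theorem continuousOn_sensitivity (A : E →L[ℝ] E) {B : ℝ → F →L[ℝ] E} {T : ℝ}
    (hB : IntervalIntegrable B volume 0 T) : ContinuousOn (sensitivity A B) (uIcc 0 T) :=
  ((differentiable_exp_smul_const ℝ A).continuous.continuousOn.clm_comp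
    (intervalIntegral.continuousOn_primitive_interval
      ((intervalIntegrable_iff').1 (hB.exp_neg_smul_comp A)))).congr
    fun t ht => sensitivity_eq_exp_comp A (hB.mono_set (uIcc_subset_uIcc_left ht))

end Sensitivity

theorem stmt_9_general
    {X : Type*} [NormedAddCommGroup X] [InnerProductSpace ℝ X] [CompleteSpace X]
    {Y : Type*} [NormedAddCommGroup Y] [InnerProductSpace ℝ Y]
    {Θ : Type*} [NormedAddCommGroup Θ] [InnerProductSpace ℝ Θ]
    (A : X →L[ℝ] X) (C : X →L[ℝ] Y) (T : ℝ) (hT : 0 < T)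
    (hcontr : ∀ t ∈ Set.Icc (0 : ℝ) T, ‖exp (t • A)‖ ≤ 1)
    (γ : ℝ)
    (hobs : ∀ x : X, γ ^ 2 * ‖x‖ ^ 2 ≤ ∫ t in (0 : ℝ)..T, ‖C (exp (t • A) x)‖ ^ 2)
    (U₀ : Θ →L[ℝ] Θ)
    (δ : ℝ) (hδ : 0 < δ) (hU₀ : ∀ θ : Θ, δ * ‖θ‖ ^ 2 ≤ ⟪θ, U₀ θ⟫)
    (B : ℝ → Θ →L[ℝ] X)
    (hB_meas : AEStronglyMeasurable B (volume.restrict (Set.Ioc (0 : ℝ) T)))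
    (hB_L2 : IntervalIntegrable (fun s => ‖B s‖ ^ 2) volume 0 T)
    (L : ℝ) (hL : L = T * ‖C‖ * Real.sqrt (∫ s in (0 : ℝ)..T, ‖B s‖ ^ 2)) (hLpos : 0 < L) :
    let Sens : ℝ → Θ →L[ℝ] X := fun t => ∫ s in (0 : ℝ)..t, exp ((t - s) • A) ∘L B s
    ∀ (Δζ : X) (ξ : Θ),
      min (δ / L ^ 2) 1 * γ ^ 2 * ‖Δζ‖ ^ 2 ≤
        2 * ⟪ξ, U₀ ξ⟫ +
          2 * ∫ t in (0 : ℝ)..T, ‖C (exp (t • A) Δζ) + C (Sens t ξ)‖ ^ 2 := by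
  intro Sens Δζ ξ
  show _ ≤ _ + 2 * ∫ t in (0 : ℝ)..T, ‖_ + C (sensitivity A B t ξ)‖ ^ 2
  have hBL2 : MemLp B 2 (volume.restrict (Ioc 0 T)) :=
    (memLp_two_iff_integrable_sq_norm hB_meas).2
      ((intervalIntegrable_iff_integrableOn_Ioc_of_le hT.le).1 hB_L2)
  have hBint : IntervalIntegrable B volume 0 T :=
    (intervalIntegrable_iff_integrableOn_Ioc_of_le hT.le).2 (hBL2.integrable one_le_two)
  have hfree : Continuous fun t => C (exp (t • A) Δζ) :=
    C.continuous.comp ((differentiable_exp_smul_const ℝ A).continuous.clm_apply continuous_const)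
  have hforced : ContinuousOn (fun t => C (sensitivity A B t ξ)) (uIcc 0 T) :=
    C.continuous.comp_continuousOn ((continuousOn_sensitivity A hBint).clm_apply continuousOn_const)
  have hsplit := intervalIntegral_norm_sq_le_two_mul_add (μ := volume) hT.le
    ((hfree.continuousOn.add hforced).norm.pow 2).intervalIntegrable
    (hforced.norm.pow 2).intervalIntegrable
  have hforced_le := hL ▸ integral_norm_sq_sensitivity_le A C hT.le hcontr hBL2 ξ
  rw [mul_assoc]
  refine min_div_sq_one_mul_le hδ.le hLpos.ne'
    (intervalIntegral.integral_nonneg hT.le fun t _ => sq_nonneg _) (sq_nonneg ‖ξ‖) ?_ (hU₀ ξ)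
  linarith [hobs Δζ]

/-- Coercive lower bound, the analytical heart of Part 2 of the proof of Theorem 3.2. -/
theorem stmt_9
    {X : Type*} [NormedAddCommGroup X] [InnerProductSpace ℝ X] [CompleteSpace X]
    {Y : Type*} [NormedAddCommGroup Y] [InnerProductSpace ℝ Y] [CompleteSpace Y]
    {Θ : Type*} [NormedAddCommGroup Θ] [InnerProductSpace ℝ Θ] [CompleteSpace Θ]
    (A : X →L[ℝ] X) (C : X →L[ℝ] Y) (T : ℝ) (hT : 0 < T)
    (hcontr : ∀ t ∈ Set.Icc (0 : ℝ) T, ‖exp (t • A)‖ ≤ 1)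
    (γ : ℝ) (hγ : 0 < γ)
    (hobs : ∀ x : X, γ ^ 2 * ‖x‖ ^ 2 ≤ ∫ t in (0 : ℝ)..T, ‖C (exp (t • A) x)‖ ^ 2)
    (U₀ : Θ →L[ℝ] Θ) (hU₀sa : ContinuousLinearMap.adjoint U₀ = U₀)
    (δ : ℝ) (hδ : 0 < δ) (hU₀ : ∀ θ : Θ, δ * ‖θ‖ ^ 2 ≤ ⟪θ, U₀ θ⟫)
    (B : ℝ → Θ →L[ℝ] X)
    (hB_meas : AEStronglyMeasurable B (volume.restrict (Set.Ioc (0 : ℝ) T)))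
    (hB_L2 : IntervalIntegrable (fun s => ‖B s‖ ^ 2) volume 0 T)
    (L : ℝ) (hL : L = T * ‖C‖ * Real.sqrt (∫ s in (0 : ℝ)..T, ‖B s‖ ^ 2)) (hLpos : 0 < L) :
    let Sens : ℝ → Θ →L[ℝ] X := fun t => ∫ s in (0 : ℝ)..t, exp ((t - s) • A) ∘L B s
    ∀ (Δζ : X) (ξ : Θ),
      min (δ / L ^ 2) 1 * γ ^ 2 * ‖Δζ‖ ^ 2 ≤
        2 * ⟪ξ, U₀ ξ⟫ +
          2 * ∫ t in (0 : ℝ)..T, ‖C (exp (t • A) Δζ) + C (Sens t ξ)‖ ^ 2 :=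
  stmt_9_general A C T hT hcontr γ hobs U₀ δ hδ hU₀ B hB_meas hB_L2 L hL hLpos
end

section
/- Let α > 0, c ≥ 0, and let (κ_j)_{j≥1} be a sequence of positive reals with ακ_j ≤ 1 for all j, ∑_{j=1}^∞ κ_j = ∞ and ∑_{j=1}^∞ κ_j² < ∞. Let (a_j)_{j≥0} be a sequence of nonnegative reals satisfying a_j ≤ (1 − ακ_j) a_{j−1} + c κ_j² for all j ≥ 1. Then a_j → 0 as j → ∞. -/
open Finset Filter
set_option maxHeartbeats 1000000

/-- Recursive-sequence convergence lemma (final step in the proof of Theorem 3.3). -/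
theorem stmt_12
    (α c : ℝ) (hα : 0 < α) (hc : 0 ≤ c)
    (κ : ℕ → ℝ) (hκpos : ∀ j, 1 ≤ j → 0 < κ j)
    (hκle : ∀ j, 1 ≤ j → α * κ j ≤ 1)
    (hκdiv : ¬ Summable (fun j => κ j))
    (hκsq : Summable (fun j => (κ j) ^ 2))
    (a : ℕ → ℝ) (ha_nonneg : ∀ j, 0 ≤ a j)
    (ha_rec : ∀ j, 1 ≤ j → a j ≤ (1 - α * κ j) * a (j - 1) + c * (κ j) ^ 2) :
    Filter.Tendsto a Filter.atTop (nhds 0) := by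
  -- Key unrolled bound
  have key : ∀ N k, N ≤ k → a k ≤ (∏ j ∈ Finset.Ioc N k, (1 - α * κ j)) * a N
      + c * ∑ j ∈ Finset.Ioc N k, κ j ^ 2 := by
    intro N k hk
    induction k with
    | zero =>
      interval_cases N
      simp
    | succ k ih =>
      rcases eq_or_lt_of_le hk with h | h
      · rw [← h]; simp
      · have hNk : N ≤ k := Nat.lt_succ_iff.mp h
        have ih' := ih hNk
        have h1 : 1 ≤ k + 1 := Nat.succ_le_succ (Nat.zero_le k)
        have hrec := ha_rec (k + 1) h1
        simp only [Nat.add_sub_cancel] at hrec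
        have hfac : 0 ≤ 1 - α * κ (k + 1) := by linarith [hκle (k + 1) h1]
        have hQ : 0 ≤ ∑ j ∈ Finset.Ioc N k, κ j ^ 2 :=
          Finset.sum_nonneg fun j _ => sq_nonneg _
        have hκk : 0 < κ (k + 1) := hκpos (k + 1) h1
        rw [Finset.sum_Ioc_succ_top hNk, Finset.prod_Ioc_succ_top hNk]
        have step : a (k + 1) ≤ (1 - α * κ (k + 1)) *
            ((∏ j ∈ Finset.Ioc N k, (1 - α * κ j)) * a N
              + c * ∑ j ∈ Finset.Ioc N k, κ j ^ 2) + c * κ (k + 1) ^ 2 := by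
          calc a (k + 1) ≤ (1 - α * κ (k + 1)) * a k + c * κ (k + 1) ^ 2 := hrec
          _ ≤ _ := by nlinarith [mul_le_mul_of_nonneg_left ih' hfac]
        have hακ : 0 ≤ α * κ (k + 1) := by positivity
        nlinarith [mul_nonneg (mul_nonneg hακ hc) hQ]
  rw [Metric.tendsto_atTop]
  intro ε hε
  have hc1 : (0:ℝ) < c + 1 := by linarith
  set ε' := ε / (2 * (c + 1)) with hε'def
  have hε' : 0 < ε' := by positivity
  -- choose N with small tail of squares
  have htail : Tendsto (fun N => ∑' i, κ (i + N) ^ 2) atTop (nhds 0) :=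
    tendsto_sum_nat_add (fun j => κ j ^ 2)
  obtain ⟨N₀, hN₀⟩ := (htail.eventually_lt_const hε').exists_forall_of_atTop
  set N := N₀ with hNdef
  have hN : ∑' i, κ (i + (N + 1)) ^ 2 < ε' := hN₀ (N + 1) (Nat.le_succ N)
  have hsq' : Summable (fun i => κ (i + (N + 1)) ^ 2) :=
    (summable_nat_add_iff (N + 1)).mpr hκsq
  -- partial tail sums of squares bounded by ε'
  have hQbound : ∀ k, ∑ j ∈ Finset.Ioc N k, κ j ^ 2 < ε' := by
    intro k
    have e1 : ∑ j ∈ Finset.Ioc N k, κ j ^ 2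
        = ∑ i ∈ Finset.range (k + 1 - (N + 1)), κ ((N + 1) + i) ^ 2 := by
      rw [← Finset.Icc_add_one_left_eq_Ioc, ← Finset.Ico_add_one_right_eq_Icc, Finset.sum_Ico_eq_sum_range]
    calc ∑ j ∈ Finset.Ioc N k, κ j ^ 2
        = ∑ i ∈ Finset.range (k + 1 - (N + 1)), κ (i + (N + 1)) ^ 2 := by
          rw [e1]; exact Finset.sum_congr rfl fun i _ => by rw [add_comm]
      _ ≤ ∑' i, κ (i + (N + 1)) ^ 2 :=
          Summable.sum_le_tsum _ (fun i _ => sq_nonneg _) hsq'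
      _ < ε' := hN
  -- divergence of partial sums over Ioc N k
  have hdiv' : ¬ Summable (fun j => κ (j + 1)) := fun h => hκdiv ((summable_nat_add_iff 1).mp h)
  have hT : Tendsto (fun k => ∑ i ∈ Finset.range k, κ (i + 1)) atTop atTop :=
    (not_summable_iff_tendsto_nat_atTop_of_nonneg
      (fun i => (hκpos (i + 1) (Nat.succ_le_succ (Nat.zero_le i))).le)).mp hdiv'
  have hrange_eq : ∀ m : ℕ, ∑ i ∈ Finset.range m, κ (i + 1) = ∑ j ∈ Finset.Ioc 0 m, κ j := by
    intro m
    rw [← Finset.Icc_add_one_left_eq_Ioc, ← Finset.Ico_add_one_right_eq_Icc, Finset.sum_Ico_eq_sum_range]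
    simp [add_comm]
  have hS : Tendsto (fun k => ∑ j ∈ Finset.Ioc N k, κ j) atTop atTop := by
    have h1 : Tendsto (fun k => (∑ i ∈ Finset.range k, κ (i + 1))
        - ∑ j ∈ Finset.Ioc 0 N, κ j) atTop atTop :=
      tendsto_atTop_add_const_right _ _ hT
    refine h1.congr' ?_
    filter_upwards [eventually_ge_atTop N] with k hk
    rw [hrange_eq k, ← Finset.sum_Ioc_consecutive κ (Nat.zero_le N) hk]
    ring
  -- exp term tends to 0
  have hSneg : Tendsto (fun k => -α * ∑ j ∈ Finset.Ioc N k, κ j) atTop atBot := by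
    exact (tendsto_neg_atBot_iff.mpr (hS.const_mul_atTop hα)).congr (fun k => by ring)
  have hexp : Tendsto (fun k => Real.exp (-α * ∑ j ∈ Finset.Ioc N k, κ j) * a N)
      atTop (nhds 0) := by
    have := (Real.tendsto_exp_atBot.comp hSneg).mul_const (a N)
    simpa using this
  have hhalf : (0:ℝ) < ε / 2 := by linarith
  obtain ⟨K₀, hK₀⟩ := (hexp.eventually_lt_const hhalf).exists_forall_of_atTop
  refine ⟨max K₀ N, fun k hk => ?_⟩
  have hkK : K₀ ≤ k := le_trans (le_max_left _ _) hk
  have hkN : N ≤ k := le_trans (le_max_right _ _) hk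
  have hbound := key N k hkN
  -- product bound by exponential
  have hprod_nonneg : 0 ≤ ∏ j ∈ Finset.Ioc N k, (1 - α * κ j) :=
    Finset.prod_nonneg fun j hj => by
      have hj1 : 1 ≤ j := Nat.one_le_iff_ne_zero.mpr (by
        have := (Finset.mem_Ioc.mp hj).1; omega)
      linarith [hκle j hj1]
  have hprod_le : ∏ j ∈ Finset.Ioc N k, (1 - α * κ j)
      ≤ Real.exp (-α * ∑ j ∈ Finset.Ioc N k, κ j) := by
    have e2 : Real.exp (-α * ∑ j ∈ Finset.Ioc N k, κ j)
        = ∏ j ∈ Finset.Ioc N k, Real.exp (-(α * κ j)) := by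
      rw [← Real.exp_sum]
      congr 1
      rw [Finset.mul_sum]
      exact Finset.sum_congr rfl fun j _ => by ring
    rw [e2]
    refine Finset.prod_le_prod (fun j hj => ?_) (fun j hj => ?_)
    · have hj1 : 1 ≤ j := by have := (Finset.mem_Ioc.mp hj).1; omega
      linarith [hκle j hj1]
    · linarith [Real.add_one_le_exp (-(α * κ j))]
  have h2 : (∏ j ∈ Finset.Ioc N k, (1 - α * κ j)) * a N
      ≤ Real.exp (-α * ∑ j ∈ Finset.Ioc N k, κ j) * a N :=
    mul_le_mul_of_nonneg_right hprod_le (ha_nonneg N)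
  have h3 := hK₀ k hkK
  have h4 : c * ∑ j ∈ Finset.Ioc N k, κ j ^ 2 ≤ c * ε' :=
    mul_le_mul_of_nonneg_left (hQbound k).le hc
  have h5 : c * ε' ≤ ε / 2 := by
    rw [hε'def, mul_div_assoc']
    rw [div_le_div_iff₀ (by positivity) (by norm_num)]
    nlinarith
  have : a k < ε := by linarith
  simpa [Real.dist_eq, abs_of_nonneg (ha_nonneg k)] using this
end
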